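/- arXiv:1504.05285 — 2 statements merged into one kernel-verified Lean document; each statement's English description precedes it below -/
import Mathlib

section
/- Let T > 0 and K > 0 be constants. Let α and β be nonnegative functions in L¹((0,T)). Let A and B be integrable functions on (0,T) with A(t) ≥ 1 and B(t) > 0 for all t, such that A is absolutely continuous on (0,T) and continuous on [0,T). Suppose that for (almost every) t ∈ (0,T) one has A'(t) + B(t) ≤ K(α(t) + log B(t))·A(t) + β(t). Then for all t ∈ [0,T), sup_{0≤s≤t} A(s) + ∫₀ᵗ B(s) ds ≤ (2Q(t) + 1)·e^{Q(t)}, where Q(t) = (log A(0) + K·∫₀ᵗ α(s) ds + ∫₀ᵗ β(s) ds + 2K²t)·e^{Kt}. -/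
/-!
Applying `log x ≤ x - 1` to `x = B / (2 K A)` and to `x = 2 K` gives
`K A log B ≤ B / 2 + K A log A + 2 K² A`, which absorbs the logarithm of `B` into the damping
term, so `A' + B / 2 ≤ h := (K α + 2 K²) A + β + K A log A`. Hence
`u r = A 0 + ∫₀ʳ h` dominates `A r + ½ ∫₀ʳ B`, and since `h ≤ (K α + β + 2 K² + K log u) u`, the
absolutely continuous function `log u`, whose derivative is `h / u`, satisfies the linear
differential inequality `(log u)' ≤ K α + β + 2 K² + K log u`. The integrating factor `e^{-K r}`
gives `log u t ≤ Q t`, and then `sup A + ∫₀ᵗ B ≤ 3 e^Q - 2 ≤ (2 Q + 1) e^Q`.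
-/

open Filter MeasureTheory Set
open scoped NNReal

theorem LipschitzOnWith.comp_absolutelyContinuousOnInterval {X Y : Type*} [PseudoMetricSpace X]
    [PseudoMetricSpace Y] {g : X → Y} {f : ℝ → X} {K : ℝ≥0} {s : Set X} {a b : ℝ}
    (hg : LipschitzOnWith K g s) (hf : AbsolutelyContinuousOnInterval f a b)
    (hfs : MapsTo f (uIcc a b) s) : AbsolutelyContinuousOnInterval (g ∘ f) a b := by
  unfold AbsolutelyContinuousOnInterval at hf ⊢
  refine squeeze_zero' (.of_forall fun E ↦ Finset.sum_nonneg fun i _ ↦ dist_nonneg) ?_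
    (by simpa using hf.const_mul (K : ℝ))
  filter_upwards [mem_inf_of_right (mem_principal_self _)] with E hE
  rw [Finset.mul_sum]
  gcongr with i hi
  exact hg.dist_le_mul _ (hfs (hE.1 i hi).1) _ (hfs (hE.1 i hi).2)

theorem AbsolutelyContinuousOnInterval.log {f : ℝ → ℝ} {a b : ℝ}
    (hf : AbsolutelyContinuousOnInterval f a b) (hpos : ∀ x ∈ uIcc a b, 0 < f x) :
    AbsolutelyContinuousOnInterval (fun x ↦ Real.log (f x)) a b := by
  obtain ⟨x₀, hx₀, hmin⟩ := isCompact_uIcc.exists_isMinOn nonempty_uIcc hf.continuousOn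
  obtain ⟨C, hC⟩ := hf.exists_bound
  have hsub : Icc (f x₀) C ⊆ {0}ᶜ := fun y hy ↦ ((hpos x₀ hx₀).trans_le hy.1).ne'
  obtain ⟨L, hL⟩ := (Real.contDiffOn_log (n := 1).mono hsub).exists_lipschitzOnWith
    one_ne_zero (convex_Icc _ _) isCompact_Icc
  exact hL.comp_absolutelyContinuousOnInterval hf
    fun x hx ↦ ⟨hmin hx, (le_abs_self _).trans (hC x hx)⟩

theorem AbsolutelyContinuousOnInterval.le_mul_exp_of_deriv_le {φ g : ℝ → ℝ} {a b K : ℝ}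
    (hφ : AbsolutelyContinuousOnInterval φ a b) (hab : a ≤ b) (hK : 0 ≤ K)
    (hg : IntegrableOn g (Ioo a b)) (hg_nonneg : ∀ᵐ x ∂volume.restrict (Ioo a b), 0 ≤ g x)
    (hderiv : ∀ᵐ x ∂volume.restrict (Ioo a b), deriv φ x ≤ g x + K * φ x) :
    φ b ≤ (φ a + ∫ x in Ioo a b, g x) * Real.exp (K * (b - a)) := by
  set e : ℝ → ℝ := fun x ↦ Real.exp (-K * (x - a))
  have he : AbsolutelyContinuousOnInterval e a b :=
    ContDiffOn.absolutelyContinuousOnInterval (by fun_prop)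
  have hΨ := he.mul hφ
  have hderivΨ : ∀ᵐ x ∂volume.restrict (Ioo a b), deriv (e * φ) x ≤ g x := by
    filter_upwards [ae_restrict_of_ae hφ.ae_differentiableAt, hg_nonneg, hderiv,
      ae_restrict_mem measurableSet_Ioo] with x hdiff hg0 hle hx
    have he' : HasDerivAt e (-K * e x) x := by
      simpa [e, mul_comm] using ((hasDerivAt_id x).sub_const a |>.const_mul (-K)).exp
    have he1 : e x ≤ 1 := Real.exp_le_one_iff.2 (by nlinarith [hx.1])
    rw [(he'.mul (hdiff (Ioo_subset_Icc_self.trans Icc_subset_uIcc hx)).hasDerivAt).deriv]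
    nlinarith [mul_le_mul_of_nonneg_left hle (Real.exp_pos (-K * (x - a))).le,
      mul_le_mul_of_nonneg_right he1 hg0]
  have hint : e b * φ b - e a * φ a ≤ ∫ x in Ioo a b, g x := by
    rw [← Pi.mul_apply e φ, ← Pi.mul_apply e φ, ← hΨ.integral_deriv_eq_sub,
      intervalIntegral.integral_of_le hab, integral_Ioc_eq_integral_Ioo]
    exact setIntegral_mono_ae_restrict
      (hΨ.intervalIntegrable_deriv.1.mono_set Ioo_subset_Ioc_self) hg hderivΨ
  have hexp : e b * Real.exp (K * (b - a)) = 1 := by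
    rw [← Real.exp_add]; simp
  calc φ b = e b * φ b * Real.exp (K * (b - a)) := by rw [mul_right_comm, hexp, one_mul]
    _ ≤ (φ a + ∫ x in Ioo a b, g x) * Real.exp (K * (b - a)) := by
      gcongr
      simp only [e, sub_self, mul_zero, Real.exp_zero, one_mul] at hint
      linarith

theorem log_add_integral_le_mul_exp {h g : ℝ → ℝ} {a b c K : ℝ} (hab : a ≤ b) (hc : 0 < c)
    (hK : 0 ≤ K) (hh : IntegrableOn h (Ioo a b)) (hh_nonneg : ∀ x ∈ Ioo a b, 0 ≤ h x)
    (hg : IntegrableOn g (Ioo a b)) (hg_nonneg : ∀ x ∈ Ioo a b, 0 ≤ g x)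
    (hhg : ∀ x ∈ Ioo a b, h x ≤
      (g x + K * Real.log (c + ∫ s in Ioo a x, h s)) * (c + ∫ s in Ioo a x, h s)) :
    Real.log (c + ∫ s in Ioo a b, h s) ≤
      (Real.log c + ∫ x in Ioo a b, g x) * Real.exp (K * (b - a)) := by
  have hh' : IntervalIntegrable h volume a b :=
    (intervalIntegrable_iff_integrableOn_Ioo_of_le hab).2 hh
  set u : ℝ → ℝ := fun x ↦ c + ∫ s in a..x, h s
  have hu_eq : ∀ x, a ≤ x → u x = c + ∫ s in Ioo a x, h s := fun x hx ↦ by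
    simp only [u, intervalIntegral.integral_of_le hx, integral_Ioc_eq_integral_Ioo]
  have hu_pos : ∀ x ∈ uIcc a b, 0 < u x := by
    intro x hx
    rw [uIcc_of_le hab] at hx
    rw [hu_eq x hx.1]
    have : 0 ≤ ∫ s in Ioo a x, h s := setIntegral_nonneg measurableSet_Ioo
      fun s hs ↦ hh_nonneg s ⟨hs.1, hs.2.trans_le hx.2⟩
    linarith
  have hu : AbsolutelyContinuousOnInterval u a b :=
    (contDiffOn_const (c := c)).absolutelyContinuousOnInterval.add
      (hh'.absolutelyContinuousOnInterval_intervalIntegral left_mem_uIcc)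
  have hderiv : ∀ᵐ x ∂volume.restrict (Ioo a b),
      deriv (fun x ↦ Real.log (u x)) x ≤ g x + K * Real.log (u x) := by
    filter_upwards [ae_restrict_of_ae hh'.ae_hasDerivAt_integral,
      ae_restrict_mem measurableSet_Ioo] with x hderiv hx
    have hxab : x ∈ uIcc a b := Ioo_subset_Icc_self.trans Icc_subset_uIcc hx
    rw [(((hderiv hxab a left_mem_uIcc).const_add c).log (hu_pos x hxab).ne').deriv,
      div_le_iff₀ (hu_pos x hxab), hu_eq x hx.1.le]
    exact hhg x hx
  simpa [u, hu_eq b hab] using (hu.log hu_pos).le_mul_exp_of_deriv_le hab hK hg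
    (ae_restrict_of_forall_mem measurableSet_Ioo hg_nonneg) hderiv

theorem setIntegral_mul_add_add_const {α β : ℝ → ℝ} {a b K c : ℝ} (hab : a ≤ b)
    (hα : IntegrableOn α (Ioo a b)) (hβ : IntegrableOn β (Ioo a b)) :
    ∫ s in Ioo a b, (K * α s + β s + c) =
      K * (∫ s in Ioo a b, α s) + (∫ s in Ioo a b, β s) + c * (b - a) := by
  rw [integral_add ((hα.const_mul K).fun_add hβ) (integrable_const c),
    integral_add (hα.const_mul K) hβ, integral_const_mul, setIntegral_const]
  simp [hab, mul_comm]

theorem add_half_integral_le_of_ae_le {A A' B h : ℝ → ℝ} {r : ℝ}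
    (hA : A r = A 0 + ∫ s in Ioo 0 r, A' s) (hA' : IntegrableOn A' (Ioo 0 r))
    (hB : IntegrableOn B (Ioo 0 r)) (hh : IntegrableOn h (Ioo 0 r))
    (hle : ∀ᵐ s ∂volume.restrict (Ioo 0 r), A' s + B s / 2 ≤ h s) :
    A r + (∫ s in Ioo 0 r, B s) / 2 ≤ A 0 + ∫ s in Ioo 0 r, h s := by
  have : ∫ s in Ioo 0 r, (A' s + B s / 2) ≤ ∫ s in Ioo 0 r, h s :=
    setIntegral_mono_ae_restrict (hA'.add (hB.div_const 2)) hh hle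
  rw [integral_add hA' (hB.div_const 2), integral_div] at this
  linarith

theorem three_mul_exp_sub_two_le (Q : ℝ) : 3 * Real.exp Q - 2 ≤ (2 * Q + 1) * Real.exp Q := by
  have h₁ := Real.add_one_le_exp (-Q)
  have h₂ : Real.exp (-Q) * Real.exp Q = 1 := by rw [← Real.exp_add]; simp
  nlinarith [Real.exp_pos Q]

theorem iSup_add_integral_le_of_le_exp {A B : ℝ → ℝ} {t Q : ℝ} (ht : 0 ≤ t) (hA : 1 ≤ A t)
    (hB : ∀ s ∈ Ioo 0 t, 0 ≤ B s)
    (hle : ∀ r ∈ Icc 0 t, A r + (∫ s in Ioo 0 r, B s) / 2 ≤ Real.exp Q) :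
    (⨆ s : Icc 0 t, A s) + ∫ s in Ioo 0 t, B s ≤ (2 * Q + 1) * Real.exp Q := by
  have hB_int : ∀ r ∈ Icc 0 t, 0 ≤ ∫ s in Ioo 0 r, B s := fun r hr ↦
    setIntegral_nonneg measurableSet_Ioo fun s hs ↦ hB s ⟨hs.1, hs.2.trans_le hr.2⟩
  have : Nonempty (Icc 0 t) := ⟨⟨0, left_mem_Icc.2 ht⟩⟩
  have hsup : (⨆ s : Icc 0 t, A s) ≤ Real.exp Q :=
    ciSup_le fun s ↦ by linarith [hle s s.2, hB_int s s.2]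
  linarith [hle t (right_mem_Icc.2 ht), three_mul_exp_sub_two_le Q]

theorem mul_log_le_half_add_mul_log {K a b : ℝ} (hK : 0 < K) (ha : 0 < a) (hb : 0 < b) :
    K * a * Real.log b ≤ b / 2 + K * a * Real.log a + 2 * K ^ 2 * a := by
  have hKa : 0 < 2 * K * a := by positivity
  have hsplit : Real.log b = Real.log (b / (2 * K * a)) + Real.log (2 * K) + Real.log a := by
    rw [← Real.log_mul (by positivity) (by positivity), ← Real.log_mul (by positivity) ha.ne']
    congr 1
    field_simp
  have h₁ := mul_le_mul_of_nonneg_left (Real.log_le_sub_one_of_pos (div_pos hb hKa))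
    (by positivity : 0 ≤ K * a)
  have h₂ := mul_le_mul_of_nonneg_left (Real.log_le_sub_one_of_pos (by positivity : 0 < 2 * K))
    (by positivity : 0 ≤ K * a)
  have h₃ : K * a * (b / (2 * K * a)) = b / 2 := by field_simp
  rw [hsplit]
  nlinarith

noncomputable def gronwallDensity (K : ℝ) (α β A : ℝ → ℝ) (s : ℝ) : ℝ :=
  (K * α s + 2 * K ^ 2) * A s + β s + K * A s * Real.log (A s)

section gronwallDensity

variable {K : ℝ} {α β A : ℝ → ℝ} {s : ℝ}

theorem add_half_le_gronwallDensity {A' B : ℝ → ℝ} (hK : 0 < K) (hA : 0 < A s)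
    (hB : 0 < B s) (hineq : A' s + B s ≤ K * (α s + Real.log (B s)) * A s + β s) :
    A' s + B s / 2 ≤ gronwallDensity K α β A s := by
  have := mul_log_le_half_add_mul_log hK hA hB
  unfold gronwallDensity
  nlinarith

theorem gronwallDensity_nonneg (hK : 0 ≤ K) (hα : 0 ≤ α s) (hβ : 0 ≤ β s) (hA : 1 ≤ A s) :
    0 ≤ gronwallDensity K α β A s := by
  have := Real.log_nonneg hA
  unfold gronwallDensity
  positivity

theorem gronwallDensity_le {v : ℝ} (hK : 0 ≤ K) (hα : 0 ≤ α s) (hβ : 0 ≤ β s) (hA : 1 ≤ A s)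
    (hAv : A s ≤ v) :
    gronwallDensity K α β A s ≤ (K * α s + β s + 2 * K ^ 2 + K * Real.log v) * v := by
  have hlog : Real.log (A s) ≤ Real.log v := Real.log_le_log (by linarith) hAv
  have h₁ := mul_le_mul_of_nonneg_left hAv (by positivity : 0 ≤ K * α s + 2 * K ^ 2)
  have h₂ := mul_le_mul hAv hlog (Real.log_nonneg hA) (by linarith)
  have h₃ : β s ≤ β s * v := le_mul_of_one_le_right hβ (hA.trans hAv)
  unfold gronwallDensity
  nlinarith

theorem integrableOn_gronwallDensity {a b : ℝ} (hα : IntegrableOn α (Ioo a b))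
    (hβ : IntegrableOn β (Ioo a b)) (hA : ContinuousOn A (Icc a b)) :
    IntegrableOn (gronwallDensity K α β A) (Ioo a b) := by
  have hA' := (hA.integrableOn_Icc (μ := volume)).mono_set Ioo_subset_Icc_self
  have hAlog : IntegrableOn (fun s ↦ K * A s * Real.log (A s)) (Ioo a b) := by
    refine (ContinuousOn.integrableOn_Icc ?_).mono_set Ioo_subset_Icc_self
    simpa only [Function.comp_def, mul_assoc] using
      continuousOn_const.fun_mul (Real.continuous_mul_log.comp_continuousOn hA)
  obtain ⟨C, hC⟩ := isCompact_Icc.exists_bound_of_continuousOn hA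
  have hαA : IntegrableOn (fun s ↦ (K * α s + 2 * K ^ 2) * A s) (Ioo a b) :=
    ((hα.const_mul K).add (integrable_const _)).mul_bdd hA'.1
      (ae_restrict_of_forall_mem measurableSet_Ioo fun x hx ↦ hC x (Ioo_subset_Icc_self hx))
  exact (hαA.add hβ).add hAlog

theorem ae_add_half_le_gronwallDensity {t : ℝ} {A' B : ℝ → ℝ} (hK : 0 < K)
    (hA : ∀ s ∈ Ioo 0 t, 0 < A s) (hB : ∀ s ∈ Ioo 0 t, 0 < B s)
    (hineq : ∀ᵐ s ∂volume.restrict (Ioo 0 t),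
      A' s + B s ≤ K * (α s + Real.log (B s)) * A s + β s) :
    ∀ᵐ s ∂volume.restrict (Ioo 0 t), A' s + B s / 2 ≤ gronwallDensity K α β A s := by
  filter_upwards [hineq, ae_restrict_mem measurableSet_Ioo] with s hs hst
  exact add_half_le_gronwallDensity hK (hA s hst) (hB s hst) hs

theorem log_add_integral_gronwallDensity_le {t : ℝ} (hK : 0 ≤ K) (ht : 0 ≤ t)
    (hα_nonneg : ∀ s ∈ Ioo 0 t, 0 ≤ α s) (hβ_nonneg : ∀ s ∈ Ioo 0 t, 0 ≤ β s)
    (hα_int : IntegrableOn α (Ioo 0 t)) (hβ_int : IntegrableOn β (Ioo 0 t))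
    (hA_ge_one : ∀ s ∈ Icc 0 t, 1 ≤ A s) (hA_cont : ContinuousOn A (Icc 0 t))
    (hA_le : ∀ s ∈ Ioo 0 t, A s ≤ A 0 + ∫ x in Ioo 0 s, gronwallDensity K α β A x) :
    Real.log (A 0 + ∫ s in Ioo 0 t, gronwallDensity K α β A s) ≤
      (Real.log (A 0) + K * (∫ s in Ioo 0 t, α s) + (∫ s in Ioo 0 t, β s) + 2 * K ^ 2 * t)
        * Real.exp (K * t) := by
  have hlog := log_add_integral_le_mul_exp (g := fun s ↦ K * α s + β s + 2 * K ^ 2) ht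
    (by linarith [hA_ge_one 0 (left_mem_Icc.2 ht)]) hK
    (integrableOn_gronwallDensity hα_int hβ_int hA_cont)
    (fun s hs ↦ gronwallDensity_nonneg hK (hα_nonneg s hs) (hβ_nonneg s hs)
      (hA_ge_one s (Ioo_subset_Icc_self hs)))
    (((hα_int.const_mul K).fun_add hβ_int).fun_add (integrable_const _))
    (fun s hs ↦ by have := hα_nonneg s hs; have := hβ_nonneg s hs; positivity)
    (fun s hs ↦ gronwallDensity_le hK (hα_nonneg s hs) (hβ_nonneg s hs)
      (hA_ge_one s (Ioo_subset_Icc_self hs)) (hA_le s hs))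
  rwa [setIntegral_mul_add_add_const ht hα_int hβ_int, sub_zero, ← add_assoc, ← add_assoc]
    at hlog

end gronwallDensity

theorem log_gronwall_on_Icc {K t : ℝ} {α β A B A' : ℝ → ℝ} (hK : 0 < K) (ht : 0 ≤ t)
    (hα_nonneg : ∀ s ∈ Ioo 0 t, 0 ≤ α s) (hβ_nonneg : ∀ s ∈ Ioo 0 t, 0 ≤ β s)
    (hα_int : IntegrableOn α (Ioo 0 t)) (hβ_int : IntegrableOn β (Ioo 0 t))
    (hA_ge_one : ∀ s ∈ Icc 0 t, 1 ≤ A s) (hB_pos : ∀ s ∈ Ioo 0 t, 0 < B s)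
    (hB_int : IntegrableOn B (Ioo 0 t)) (hA_cont : ContinuousOn A (Icc 0 t))
    (hA'_int : IntegrableOn A' (Ioo 0 t))
    (hFTC : ∀ r ∈ Icc 0 t, A r = A 0 + ∫ s in Ioo 0 r, A' s)
    (hineq : ∀ᵐ s ∂volume.restrict (Ioo 0 t),
      A' s + B s ≤ K * (α s + Real.log (B s)) * A s + β s) :
    (⨆ s : Icc 0 t, A s) + ∫ s in Ioo 0 t, B s ≤
      (2 * ((Real.log (A 0) + K * (∫ s in Ioo 0 t, α s) + (∫ s in Ioo 0 t, β s) + 2 * K ^ 2 * t)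
        * Real.exp (K * t)) + 1) * Real.exp ((Real.log (A 0) + K * (∫ s in Ioo 0 t, α s)
          + (∫ s in Ioo 0 t, β s) + 2 * K ^ 2 * t) * Real.exp (K * t)) := by
  have hIoo : ∀ r ∈ Icc 0 t, Ioo 0 r ⊆ Ioo 0 t := fun r hr ↦ Ioo_subset_Ioo_right hr.2
  set h := gronwallDensity K α β A
  set u : ℝ → ℝ := fun r ↦ A 0 + ∫ s in Ioo 0 r, h s
  have hh_int : IntegrableOn h (Ioo 0 t) := integrableOn_gronwallDensity hα_int hβ_int hA_cont
  have hh_le := ae_add_half_le_gronwallDensity hK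
    (fun s hs ↦ zero_lt_one.trans_le (hA_ge_one s (Ioo_subset_Icc_self hs))) hB_pos hineq
  have hAu : ∀ r ∈ Icc 0 t, A r + (∫ s in Ioo 0 r, B s) / 2 ≤ u r := fun r hr ↦
    add_half_integral_le_of_ae_le (hFTC r hr) (hA'_int.mono_set (hIoo r hr))
      (hB_int.mono_set (hIoo r hr)) (hh_int.mono_set (hIoo r hr))
      (ae_restrict_of_ae_restrict_of_subset (hIoo r hr) hh_le)
  have hA_le_u : ∀ r ∈ Icc 0 t, A r ≤ u r := fun r hr ↦ by
    have : 0 ≤ ∫ s in Ioo 0 r, B s := setIntegral_nonneg measurableSet_Ioo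
      fun s hs ↦ (hB_pos s (hIoo r hr hs)).le
    linarith [hAu r hr]
  have hu_mono : ∀ r ∈ Icc 0 t, u r ≤ u t := fun r hr ↦
    add_le_add_right (setIntegral_mono_set hh_int (ae_restrict_of_forall_mem measurableSet_Ioo
      fun s hs ↦ gronwallDensity_nonneg hK.le (hα_nonneg s hs) (hβ_nonneg s hs)
        (hA_ge_one s (Ioo_subset_Icc_self hs))) (hIoo r hr).eventuallyLE) _
  have hu_pos : 0 < u t := by
    linarith [hA_le_u t (right_mem_Icc.2 ht), hA_ge_one t (right_mem_Icc.2 ht)]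
  have hlog := log_add_integral_gronwallDensity_le hK.le ht hα_nonneg hβ_nonneg hα_int hβ_int
    hA_ge_one hA_cont fun s hs ↦ hA_le_u s (Ioo_subset_Icc_self hs)
  refine iSup_add_integral_le_of_le_exp ht (hA_ge_one t (right_mem_Icc.2 ht))
    (fun s hs ↦ (hB_pos s hs).le) fun r hr ↦ ?_
  exact (hAu r hr).trans ((hu_mono r hr).trans ((Real.log_le_iff_le_exp hu_pos).1 hlog))

theorem log_gronwall_inequality_general
    (T K : ℝ) (hK : 0 < K)
    (α β A B A' : ℝ → ℝ)
    (hα_nonneg : ∀ t ∈ Ioo (0:ℝ) T, 0 ≤ α t)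
    (hβ_nonneg : ∀ t ∈ Ioo (0:ℝ) T, 0 ≤ β t)
    (hα_int : IntegrableOn α (Ioo 0 T))
    (hβ_int : IntegrableOn β (Ioo 0 T))
    (hA_ge_one : ∀ t ∈ Ico (0:ℝ) T, 1 ≤ A t)
    (hB_pos : ∀ t ∈ Ioo (0:ℝ) T, 0 < B t)
    (hB_int : IntegrableOn B (Ioo 0 T))
    (hA_cont : ContinuousOn A (Ico 0 T))
    (hA'_int : IntegrableOn A' (Ioo 0 T))
    (hFTC : ∀ t ∈ Ico (0:ℝ) T, A t = A 0 + ∫ s in Ioo (0:ℝ) t, A' s)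
    (hineq : ∀ᵐ t ∂(volume.restrict (Ioo (0:ℝ) T)),
      A' t + B t ≤ K * (α t + Real.log (B t)) * A t + β t) :
    ∀ t ∈ Ico (0:ℝ) T,
      (⨆ s : Icc (0:ℝ) t, A s.1) + (∫ s in Ioo (0:ℝ) t, B s)
        ≤ (2 * ((Real.log (A 0) + K * (∫ s in Ioo (0:ℝ) t, α s)
                  + (∫ s in Ioo (0:ℝ) t, β s) + 2 * K ^ 2 * t) * Real.exp (K * t)) + 1)
            * Real.exp ((Real.log (A 0) + K * (∫ s in Ioo (0:ℝ) t, α s)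
                  + (∫ s in Ioo (0:ℝ) t, β s) + 2 * K ^ 2 * t) * Real.exp (K * t)) := by
  intro t ⟨ht, htT⟩
  have hIoo : Ioo 0 t ⊆ Ioo 0 T := Ioo_subset_Ioo_right htT.le
  have hIcc : Icc 0 t ⊆ Ico 0 T := Icc_subset_Ico_right htT
  exact log_gronwall_on_Icc hK ht (fun s hs ↦ hα_nonneg s (hIoo hs))
    (fun s hs ↦ hβ_nonneg s (hIoo hs)) (hα_int.mono_set hIoo) (hβ_int.mono_set hIoo)
    (fun s hs ↦ hA_ge_one s (hIcc hs)) (fun s hs ↦ hB_pos s (hIoo hs)) (hB_int.mono_set hIoo)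
    (hA_cont.mono hIcc) (hA'_int.mono_set hIoo) (fun r hr ↦ hFTC r (hIcc hr))
    (ae_restrict_of_ae_restrict_of_subset hIoo hineq)

theorem log_gronwall_inequality
    (T K : ℝ) (hT : 0 < T) (hK : 0 < K)
    (α β A B A' : ℝ → ℝ)
    (hα_nonneg : ∀ t ∈ Ioo (0:ℝ) T, 0 ≤ α t)
    (hβ_nonneg : ∀ t ∈ Ioo (0:ℝ) T, 0 ≤ β t)
    (hα_int : IntegrableOn α (Ioo 0 T))
    (hβ_int : IntegrableOn β (Ioo 0 T))
    (hA_ge_one : ∀ t ∈ Ico (0:ℝ) T, 1 ≤ A t)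
    (hB_pos : ∀ t ∈ Ioo (0:ℝ) T, 0 < B t)
    (hA_int : IntegrableOn A (Ioo 0 T))
    (hB_int : IntegrableOn B (Ioo 0 T))
    (hA_cont : ContinuousOn A (Ico 0 T))
    (hA'_int : IntegrableOn A' (Ioo 0 T))
    (hA_deriv : ∀ᵐ t ∂(volume.restrict (Ioo (0:ℝ) T)), HasDerivAt A (A' t) t)
    (hFTC : ∀ t ∈ Ico (0:ℝ) T, A t = A 0 + ∫ s in Ioo (0:ℝ) t, A' s)
    (hineq : ∀ᵐ t ∂(volume.restrict (Ioo (0:ℝ) T)),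
      A' t + B t ≤ K * (α t + Real.log (B t)) * A t + β t) :
    ∀ t ∈ Ico (0:ℝ) T,
      (⨆ s : Icc (0:ℝ) t, A s.1) + (∫ s in Ioo (0:ℝ) t, B s)
        ≤ (2 * ((Real.log (A 0) + K * (∫ s in Ioo (0:ℝ) t, α s)
                  + (∫ s in Ioo (0:ℝ) t, β s) + 2 * K ^ 2 * t) * Real.exp (K * t)) + 1)
            * Real.exp ((Real.log (A 0) + K * (∫ s in Ioo (0:ℝ) t, α s)
                  + (∫ s in Ioo (0:ℝ) t, β s) + 2 * K ^ 2 * t) * Real.exp (K * t)) :=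
  log_gronwall_inequality_general T K hK α β A B A' hα_nonneg hβ_nonneg hα_int hβ_int hA_ge_one
    hB_pos hB_int hA_cont hA'_int hFTC hineq
end

section
/- Let T > 0 and K > 0 be constants. Let α and β be nonnegative functions in L¹((0,T)). Let A and B be integrable functions on (0,T) with A(t) ≥ 1 and B(t) > 0 for all t, such that A is absolutely continuous on (0,T) and continuous on [0,T), and suppose that for (almost every) t ∈ (0,T) one has A'(t) + B(t) ≤ K(α(t) + log B(t))·A(t) + β(t). Then for (almost every) t ∈ (0,T), (d/dt)(log A(t)) + B(t)/(2A(t)) ≤ K·log A(t) + K·α(t) + β(t) + 2K². -/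
/-!
Dividing the hypothesis by `A ≥ 1` gives `A'/A + B/A ≤ K α + K log B + β`. Splitting
`log B = log (B/A) + log A` and bounding `K log τ ≤ 2K√τ ≤ τ/2 + 2K²` (Young) absorbs half of
`B/A` on the left, which leaves the claimed inequality for `(log A)' = A'/A`.
-/

open MeasureTheory Set

namespace Real

lemma log_le_two_mul_sqrt {τ : ℝ} (hτ : 0 ≤ τ) : log τ ≤ 2 * √τ := by
  have h := log_le_rpow_div hτ (one_half_pos : (0 : ℝ) < 1 / 2)
  rwa [← sqrt_eq_rpow, div_div_eq_mul_div, div_one, mul_comm] at h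

lemma mul_log_le_half_add_two_mul_sq {K τ : ℝ} (hK : 0 ≤ K) (hτ : 0 ≤ τ) :
    K * log τ ≤ τ / 2 + 2 * K ^ 2 :=
  calc K * log τ ≤ K * (2 * √τ) := mul_le_mul_of_nonneg_left (log_le_two_mul_sqrt hτ) hK
    _ ≤ τ / 2 + 2 * K ^ 2 := by
      nlinarith [sq_nonneg (√τ - 2 * K), sq_sqrt hτ]

lemma div_add_half_div_le_of_add_le_mul_log {K a a' b α β : ℝ} (hK : 0 ≤ K) (hβ : 0 ≤ β)
    (ha : 1 ≤ a) (hb : 0 < b) (h : a' + b ≤ K * (α + log b) * a + β) :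
    a' / a + b / (2 * a) ≤ K * log a + K * α + β + 2 * K ^ 2 := by
  have ha₀ : 0 < a := one_pos.trans_le ha
  have hdiv : a' / a + b / a ≤ K * α + K * log b + β := by
    rw [← add_div, div_le_iff₀ ha₀]
    nlinarith
  have hlog : log b = log (b / a) + log a := by
    rw [log_div hb.ne' ha₀.ne', sub_add_cancel]
  have hyoung := mul_log_le_half_add_two_mul_sq hK (div_pos hb ha₀).le
  have hhalf : b / (2 * a) = b / a / 2 := by
    rw [div_div, mul_comm]
  rw [hlog] at hdiv
  linarith

end Real

theorem log_gronwall_first_step_general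
    (T K : ℝ) (hK : 0 < K)
    (α β A B A' : ℝ → ℝ)
    (hβ_nonneg : ∀ t ∈ Ioo (0:ℝ) T, 0 ≤ β t)
    (hA_ge_one : ∀ t ∈ Ico (0:ℝ) T, 1 ≤ A t)
    (hB_pos : ∀ t ∈ Ioo (0:ℝ) T, 0 < B t)
    (hA_deriv : ∀ᵐ t ∂(volume.restrict (Ioo (0:ℝ) T)), HasDerivAt A (A' t) t)
    (hineq : ∀ᵐ t ∂(volume.restrict (Ioo (0:ℝ) T)),
      A' t + B t ≤ K * (α t + Real.log (B t)) * A t + β t) :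
    ∀ᵐ t ∂(volume.restrict (Ioo (0:ℝ) T)),
      HasDerivAt (fun s => Real.log (A s)) (A' t / A t) t ∧
      A' t / A t + B t / (2 * A t)
        ≤ K * Real.log (A t) + K * α t + β t + 2 * K ^ 2 := by
  filter_upwards [hA_deriv, hineq, ae_restrict_mem measurableSet_Ioo] with t hderiv hle ht
  have hA : 1 ≤ A t := hA_ge_one t (Ioo_subset_Ico_self ht)
  exact ⟨hderiv.log (one_pos.trans_le hA).ne',
    Real.div_add_half_div_le_of_add_le_mul_log hK.le (hβ_nonneg t ht) hA (hB_pos t ht) hle⟩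

theorem log_gronwall_first_step
    (T K : ℝ) (hT : 0 < T) (hK : 0 < K)
    (α β A B A' : ℝ → ℝ)
    (hα_nonneg : ∀ t ∈ Ioo (0:ℝ) T, 0 ≤ α t)
    (hβ_nonneg : ∀ t ∈ Ioo (0:ℝ) T, 0 ≤ β t)
    (hα_int : IntegrableOn α (Ioo 0 T))
    (hβ_int : IntegrableOn β (Ioo 0 T))
    (hA_ge_one : ∀ t ∈ Ico (0:ℝ) T, 1 ≤ A t)
    (hB_pos : ∀ t ∈ Ioo (0:ℝ) T, 0 < B t)
    (hA_int : IntegrableOn A (Ioo 0 T))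
    (hB_int : IntegrableOn B (Ioo 0 T))
    (hA_cont : ContinuousOn A (Ico 0 T))
    (hA'_int : IntegrableOn A' (Ioo 0 T))
    (hA_deriv : ∀ᵐ t ∂(volume.restrict (Ioo (0:ℝ) T)), HasDerivAt A (A' t) t)
    (hFTC : ∀ t ∈ Ico (0:ℝ) T, A t = A 0 + ∫ s in Ioo (0:ℝ) t, A' s)
    (hineq : ∀ᵐ t ∂(volume.restrict (Ioo (0:ℝ) T)),
      A' t + B t ≤ K * (α t + Real.log (B t)) * A t + β t) :
    ∀ᵐ t ∂(volume.restrict (Ioo (0:ℝ) T)),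
      HasDerivAt (fun s => Real.log (A s)) (A' t / A t) t ∧
      A' t / A t + B t / (2 * A t)
        ≤ K * Real.log (A t) + K * α t + β t + 2 * K ^ 2 :=
  log_gronwall_first_step_general T K hK α β A B A' hβ_nonneg hA_ge_one hB_pos hA_deriv hineq
end
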